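/- arXiv:1608.06830 — 5 statements merged into one kernel-verified Lean document; each statement's English description precedes it below -/
import Mathlib

section
/- Let f : ℝ → ℝ be strictly convex on (0,∞) and let c ∈ ℝ be such that f(R) + c > 0 for all R > 0. Then the function U(R) = R/(f(R) + c) is strictly quasiconcave on (0,∞); that is, for all R₁ ≠ R₂ in (0,∞) and all λ ∈ (0,1), U(λR₁ + (1−λ)R₂) > min(U(R₁), U(R₂)). -/
theorem energy_efficiency_strictly_quasiconcave
    (f : ℝ → ℝ) (c : ℝ)
    (hconv : StrictConvexOn ℝ (Set.Ioi (0:ℝ)) f)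
    (hpos : ∀ R : ℝ, R > 0 → f R + c > 0) :
    ∀ R₁ R₂ : ℝ, R₁ ∈ Set.Ioi (0:ℝ) → R₂ ∈ Set.Ioi (0:ℝ) → R₁ ≠ R₂ →
      ∀ lam : ℝ, lam ∈ Set.Ioo (0:ℝ) 1 →
        (lam * R₁ + (1 - lam) * R₂) / (f (lam * R₁ + (1 - lam) * R₂) + c)
          > min (R₁ / (f R₁ + c)) (R₂ / (f R₂ + c)) := by
  intro R₁ R₂ hR₁ hR₂ hne lam hlam
  simp only [Set.mem_Ioi] at hR₁ hR₂
  obtain ⟨hl0, hl1⟩ := hlam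
  have hl1' : (0:ℝ) < 1 - lam := by linarith
  set R := lam * R₁ + (1 - lam) * R₂ with hRdef
  have hR : 0 < R := by positivity
  have hD : 0 < f R + c := hpos R hR
  have hD₁ : 0 < f R₁ + c := hpos R₁ hR₁
  have hD₂ : 0 < f R₂ + c := hpos R₂ hR₂
  have hstrict : f R < lam * f R₁ + (1 - lam) * f R₂ := by
    have := hconv.2 (Set.mem_Ioi.mpr hR₁) (Set.mem_Ioi.mpr hR₂) hne hl0 hl1'
      (by ring)
    simpa [smul_eq_mul] using this
  set m := min (R₁ / (f R₁ + c)) (R₂ / (f R₂ + c)) with hm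
  have hm₁ : m * (f R₁ + c) ≤ R₁ := by
    have : m ≤ R₁ / (f R₁ + c) := min_le_left _ _
    calc m * (f R₁ + c) ≤ (R₁ / (f R₁ + c)) * (f R₁ + c) := by nlinarith
      _ = R₁ := by field_simp
  have hm₂ : m * (f R₂ + c) ≤ R₂ := by
    have : m ≤ R₂ / (f R₂ + c) := min_le_right _ _
    calc m * (f R₂ + c) ≤ (R₂ / (f R₂ + c)) * (f R₂ + c) := by nlinarith
      _ = R₂ := by field_simp
  have hmpos : 0 < m := lt_min (by positivity) (by positivity)
  have key : m * (f R + c) < R := by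
    have h1 : m * (f R + c) < m * (lam * (f R₁ + c) + (1 - lam) * (f R₂ + c)) := by
      apply mul_lt_mul_of_pos_left _ hmpos
      nlinarith
    have h2 : m * (lam * (f R₁ + c) + (1 - lam) * (f R₂ + c)) ≤ R := by
      have a1 : lam * (m * (f R₁ + c)) ≤ lam * R₁ :=
        mul_le_mul_of_nonneg_left hm₁ hl0.le
      have a2 : (1 - lam) * (m * (f R₂ + c)) ≤ (1 - lam) * R₂ :=
        mul_le_mul_of_nonneg_left hm₂ hl1'.le
      nlinarith
    linarith
  rw [gt_iff_lt, lt_div_iff₀ hD]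
  linarith
end

section
/- Fix constants w > 0, P > 0, and c > 0. The function u ↦ (w/u)·log(1 + P·u/(c·w)) is strictly decreasing and strictly convex on (0,∞). -/
/-!
Substituting `x = P u / (c w)` turns the rate into `(P / c) · log (1 + x) / x`, so everything
reduces to the single function `g x = log (1 + x) / x` on `(0, ∞)`. With `s = x / (1 + x)`,
the numerators of `g'` and `g''` are `x² g' = s - log (1 + x)` and
`x³ g'' = 2 (log (1 + x) - s - s² / 2)`; both have the right sign because
`log (1 + x) = -log (1 - s) = ∑ sⁿ / n` exceeds its first two terms.
-/

open Real Set

theorem strictConvexOn_of_hasDerivAt2_pos {D : Set ℝ} (hD : Convex ℝ D) (hDo : IsOpen D)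
    {f f' f'' : ℝ → ℝ} (hf : ∀ x ∈ D, HasDerivAt f (f' x) x)
    (hf' : ∀ x ∈ D, HasDerivAt f' (f'' x) x) (hf'' : ∀ x ∈ D, 0 < f'' x) :
    StrictConvexOn ℝ D f := by
  have hmono : StrictMonoOn f' D :=
    strictMonoOn_of_hasDerivWithinAt_pos hD
      (fun x hx => (hf' x hx).continuousAt.continuousWithinAt)
      (fun x hx => (hf' x (interior_subset hx)).hasDerivWithinAt)
      (fun x hx => hf'' x (interior_subset hx))
  refine StrictMonoOn.strictConvexOn_of_deriv hD
    (fun x hx => (hf x hx).continuousAt.continuousWithinAt) ?_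
  rw [hDo.interior_eq]
  intro x hx y hy hxy
  rw [(hf x hx).deriv, (hf y hy).deriv]
  exact hmono hx hy hxy

lemma StrictConvexOn.const_mul_comp_mul_left {s t : Set ℝ} {g : ℝ → ℝ}
    (hg : StrictConvexOn ℝ s g) (ht : Convex ℝ t) {k a : ℝ} (hk : 0 < k) (ha : a ≠ 0)
    (hts : MapsTo (a * ·) t s) : StrictConvexOn ℝ t (fun x => k * g (a * x)) := by
  refine ⟨ht, fun x hx y hy hxy μ ν hμ hν hμν => ?_⟩
  have h := hg.2 (hts hx) (hts hy) (by simpa [ha] using hxy) hμ hν hμν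
  simp only [smul_eq_mul] at h ⊢
  rw [show a * (μ * x + ν * y) = μ * (a * x) + ν * (a * y) by ring]
  linarith [mul_lt_mul_of_pos_left h hk]

lemma StrictAntiOn.const_mul_comp_mul_left {s t : Set ℝ} {g : ℝ → ℝ} (hg : StrictAntiOn g s)
    {k a : ℝ} (hk : 0 < k) (ha : 0 < a) (hts : MapsTo (a * ·) t s) :
    StrictAntiOn (fun x => k * g (a * x)) t :=
  fun _ hx _ hy hxy =>
    mul_lt_mul_of_pos_left (hg (hts hx) (hts hy) (mul_lt_mul_of_pos_left hxy ha)) hk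

lemma add_sq_div_two_lt_neg_log_one_sub {s : ℝ} (hs₀ : 0 < s) (hs₁ : s < 1) :
    s + s ^ 2 / 2 < -log (1 - s) := by
  have hsum := hasSum_pow_div_log_of_abs_lt_one (abs_lt.2 ⟨by linarith, hs₁⟩)
  have h := sum_le_hasSum (Finset.range 3) (fun n _ => by positivity) hsum
  norm_num [Finset.sum_range_succ] at h
  linarith [pow_pos hs₀ 3]

lemma div_one_add_add_sq_div_two_lt_log_one_add {x : ℝ} (hx : 0 < x) :
    x / (1 + x) + (x / (1 + x)) ^ 2 / 2 < log (1 + x) := by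
  have h := add_sq_div_two_lt_neg_log_one_sub (s := x / (1 + x)) (by positivity)
    ((div_lt_one (by positivity)).2 (by linarith))
  have h_one_sub : 1 - x / (1 + x) = (1 + x)⁻¹ := by field_simp; ring
  rwa [h_one_sub, log_inv, neg_neg] at h

lemma hasDerivAt_log_one_add_div_self {x : ℝ} (hx₁ : 1 + x ≠ 0) (hx₀ : x ≠ 0) :
    HasDerivAt (fun y => log (1 + y) / y) ((x / (1 + x) - log (1 + x)) / x ^ 2) x := by
  have hlog : HasDerivAt (fun y => log (1 + y)) (1 / (1 + x)) x := by
    simpa using ((hasDerivAt_id x).const_add 1).log hx₁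
  refine (hlog.fun_div (hasDerivAt_id' x) hx₀).congr_deriv ?_
  field_simp

lemma hasDerivAt_div_one_add_sub_log_one_add_div_sq {x : ℝ} (hx₁ : 1 + x ≠ 0)
    (hx₀ : x ≠ 0) :
    HasDerivAt (fun y => (y / (1 + y) - log (1 + y)) / y ^ 2)
      ((2 * log (1 + x) - 2 * (x / (1 + x)) - (x / (1 + x)) ^ 2) / x ^ 3) x := by
  have hlin : HasDerivAt (fun y => 1 + y) 1 x := (hasDerivAt_id x).const_add 1
  have hnum : HasDerivAt (fun y => y / (1 + y) - log (1 + y))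
      ((1 * (1 + x) - x * 1) / (1 + x) ^ 2 - 1 / (1 + x)) x :=
    ((hasDerivAt_id' x).fun_div hlin hx₁).sub (by simpa using hlin.log hx₁)
  refine (hnum.fun_div (hasDerivAt_pow 2 x) (pow_ne_zero 2 hx₀)).congr_deriv ?_
  field_simp
  ring

theorem strictAntiOn_log_one_add_div_self : StrictAntiOn (fun x => log (1 + x) / x) (Ioi 0) := by
  have hderiv (x : ℝ) (hx : 0 < x) := hasDerivAt_log_one_add_div_self (by positivity) hx.ne'
  refine strictAntiOn_of_deriv_neg (convex_Ioi 0)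
    (fun x hx => (hderiv x hx).continuousAt.continuousWithinAt) ?_
  rw [interior_Ioi]
  intro x (hx : 0 < x)
  rw [(hderiv x hx).deriv]
  refine div_neg_of_neg_of_pos ?_ (by positivity)
  linarith [div_one_add_add_sq_div_two_lt_log_one_add hx, sq_nonneg (x / (1 + x))]

theorem strictConvexOn_log_one_add_div_self :
    StrictConvexOn ℝ (Ioi 0) (fun x => log (1 + x) / x) := by
  refine strictConvexOn_of_hasDerivAt2_pos (convex_Ioi 0) isOpen_Ioi
    (fun x (hx : 0 < x) => hasDerivAt_log_one_add_div_self (by positivity) hx.ne')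
    (fun x (hx : 0 < x) => hasDerivAt_div_one_add_sub_log_one_add_div_sq (by positivity) hx.ne')
    (fun x (hx : 0 < x) => div_pos ?_ (by positivity))
  linarith [div_one_add_add_sq_div_two_lt_log_one_add hx]

theorem fdma_rate_anti_convex_in_users
    (w P c : ℝ) (hw : w > 0) (hP : P > 0) (hc : c > 0) :
    StrictAntiOn (fun u : ℝ => (w / u) * Real.log (1 + P * u / (c * w))) (Set.Ioi (0:ℝ)) ∧
    StrictConvexOn ℝ (Set.Ioi (0:ℝ))
      (fun u : ℝ => (w / u) * Real.log (1 + P * u / (c * w))) := by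
  have hrate : (fun u : ℝ => (w / u) * log (1 + P * u / (c * w)))
      = fun u => P / c * (log (1 + P / (c * w) * u) / (P / (c * w) * u)) := by
    funext u
    rcases eq_or_ne u 0 with rfl | hu
    · simp
    · rw [div_mul_comm P (c * w) u]
      field_simp
  have hk : 0 < P / c := by positivity
  have ha : 0 < P / (c * w) := by positivity
  have hmaps : MapsTo (P / (c * w) * ·) (Ioi 0) (Ioi 0) := fun u (hu : 0 < u) => mul_pos ha hu
  rw [hrate]
  exact ⟨strictAntiOn_log_one_add_div_self.const_mul_comp_mul_left hk ha hmaps,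
    strictConvexOn_log_one_add_div_self.const_mul_comp_mul_left (convex_Ioi 0) hk ha.ne' hmaps⟩
end

section
/- Let Ψ be a finite nonempty set and let L : Ψ × Ψ → ℝ be a function (L(j, i) is the lifetime of node j when node i is the cluster head). Suppose i* ∈ Ψ attains the maximum over i ∈ Ψ of min_{j ∈ Ψ} L(j, i). Then for every alternative choice i ∈ Ψ and every node k ∈ Ψ with L(k, i) > L(k, i*), there exists a node m ∈ Ψ such that L(m, i) ≤ min_{j ∈ Ψ} L(j, i*) and L(m, i) < L(k, i). That is, any increase in some node's lifetime obtained by deviating from i* comes at the cost of some node whose lifetime under the deviation is smaller than the increased lifetime and no larger than the guaranteed minimum under i*. -/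
theorem maxmin_CH_selection_is_maxmin_fair
    {Ψ : Type*} [Fintype Ψ] [Nonempty Ψ]
    (L : Ψ → Ψ → ℝ) (istar : Ψ)
    (hmax : ∀ i : Ψ,
      Finset.univ.inf' Finset.univ_nonempty (fun j => L j i)
        ≤ Finset.univ.inf' Finset.univ_nonempty (fun j => L j istar)) :
    ∀ i k : Ψ, L k i > L k istar →
      ∃ m : Ψ, L m i ≤ Finset.univ.inf' Finset.univ_nonempty (fun j => L j istar)
        ∧ L m i < L k i := by
  intro i k hk
  obtain ⟨m, hm, hmeq⟩ := Finset.exists_mem_eq_inf' (Finset.univ_nonempty) (fun j => L j i)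
  refine ⟨m, ?_, ?_⟩
  · rw [← hmeq] at *
    exact hmax i
  · calc L m i = Finset.univ.inf' Finset.univ_nonempty (fun j => L j i) := hmeq ▸ rfl
      _ ≤ Finset.univ.inf' Finset.univ_nonempty (fun j => L j istar) := hmax i
      _ ≤ L k istar := Finset.inf'_le _ (Finset.mem_univ k)
      _ < L k i := hk
end

section
/- Let δ > 0, T > δ, D̃ > 0, and E_S, E_F, E_B > 0. Then the function U_E(g) = D̃/(E_S + (g·T·e^{2gδ}/(g·T·e^{gδ} + 1))·E_F + (1 + (g·T − 1)·e^{gδ})·E_B) is strictly decreasing on (0,∞). -/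
/-! The denominator of `U_E` is positive and strictly increasing in `g`. The failed-transmission
term is `x / (x + 1) · e^{gδ}` with `x = gTe^{gδ}`, a product of nonnegative nondecreasing factors.
The busy-backoff term `(gT - 1)e^{gδ}` has derivative `e^{gδ}(T - δ + gTδ) > 0` when `δ ≤ T`, so it
increases strictly from its value `-1` at `g = 0`. -/

open Real Set

lemma div_add_one_le_div_add_one {x y : ℝ} (hx : 0 ≤ x) (hxy : x ≤ y) :
    x / (x + 1) ≤ y / (y + 1) := by
  rw [div_le_div_iff₀ (by linarith) (by linarith)]
  linarith

lemma strictMonoOn_sub_one_mul_exp {δ T : ℝ} (hδ : 0 < δ) (hT : δ ≤ T) :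
    StrictMonoOn (fun g : ℝ => (g * T - 1) * exp (g * δ)) (Ici 0) := by
  apply strictMonoOn_of_deriv_pos (convex_Ici 0) (by fun_prop)
  intro g hg
  rw [interior_Ici, mem_Ioi] at hg
  have hderiv : HasDerivAt (fun g : ℝ => (g * T - 1) * exp (g * δ))
      (T * exp (g * δ) + (g * T - 1) * (exp (g * δ) * δ)) g :=
    ((hasDerivAt_mul_const T).sub_const 1).mul (hasDerivAt_mul_const δ).exp
  have hslope : 0 < T - δ + g * T * δ := by
    have : 0 < g * T * δ := by positivity [hδ.trans_le hT]
    linarith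
  rw [hderiv.deriv]
  nlinarith [mul_pos (exp_pos (g * δ)) hslope]

lemma one_add_sub_one_mul_exp_pos {δ T g : ℝ} (hδ : 0 < δ) (hT : δ ≤ T) (hg : 0 < g) :
    0 < 1 + (g * T - 1) * exp (g * δ) := by
  have := strictMonoOn_sub_one_mul_exp hδ hT self_mem_Ici hg.le hg
  simp only [zero_mul, zero_sub, exp_zero, mul_one] at this
  linarith

lemma mul_exp_two_mul_div_eq (g T δ : ℝ) :
    g * T * exp (2 * g * δ) / (g * T * exp (g * δ) + 1)
      = g * T * exp (g * δ) / (g * T * exp (g * δ) + 1) * exp (g * δ) := by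
  rw [show 2 * g * δ = g * δ + g * δ by ring, exp_add]
  ring

lemma monotoneOn_mul_exp_two_mul_div {δ T : ℝ} (hδ : 0 ≤ δ) (hT : 0 ≤ T) :
    MonotoneOn (fun g : ℝ => g * T * exp (2 * g * δ) / (g * T * exp (g * δ) + 1)) (Ici 0) := by
  intro a ha b hb hab
  rw [mem_Ici] at ha hb
  simp only [mul_exp_two_mul_div_eq]
  have hx : a * T * exp (a * δ) ≤ b * T * exp (b * δ) := by gcongr
  exact mul_le_mul (div_add_one_le_div_add_one (by positivity) hx) (by gcongr)
    (exp_pos _).le (by positivity)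

/-- The energy efficiency is `U_E(g) = D̃ / csmaEnergyCost δ T E_S E_F E_B g`. -/
noncomputable def csmaEnergyCost (δ T E_S E_F E_B g : ℝ) : ℝ :=
  E_S + (g * T * exp (2 * g * δ) / (g * T * exp (g * δ) + 1)) * E_F
    + (1 + (g * T - 1) * exp (g * δ)) * E_B

section

variable {δ T E_S E_F E_B : ℝ} (hδ : 0 < δ) (hT : δ ≤ T)

include hδ hT

lemma csmaEnergyCost_pos (hES : 0 < E_S) (hEF : 0 < E_F) (hEB : 0 < E_B) {g : ℝ} (hg : 0 < g) :
    0 < csmaEnergyCost δ T E_S E_F E_B g := by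
  have hT₀ : 0 ≤ T := hδ.le.trans hT
  have hfail : 0 ≤ g * T * exp (2 * g * δ) / (g * T * exp (g * δ) + 1) * E_F := by positivity
  have hbusy := mul_pos (one_add_sub_one_mul_exp_pos hδ hT hg) hEB
  unfold csmaEnergyCost
  linarith

lemma strictMonoOn_csmaEnergyCost (hEF : 0 < E_F) (hEB : 0 < E_B) :
    StrictMonoOn (csmaEnergyCost δ T E_S E_F E_B) (Ioi 0) := by
  intro a ha b hb hab
  have hfail := mul_le_mul_of_nonneg_right (monotoneOn_mul_exp_two_mul_div hδ.le (hδ.le.trans hT)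
    (mem_Ici_of_Ioi ha) (mem_Ici_of_Ioi hb) hab.le) hEF.le
  have hbusy := mul_lt_mul_of_pos_right (add_lt_add_left
    (strictMonoOn_sub_one_mul_exp hδ hT (mem_Ici_of_Ioi ha) (mem_Ici_of_Ioi hb) hab) 1) hEB
  unfold csmaEnergyCost
  linarith

end

theorem csma_energy_efficiency_strictly_decreasing
    (δ T D E_S E_F E_B : ℝ) (hδ : δ > 0) (hT : T > δ) (hD : D > 0)
    (hES : E_S > 0) (hEF : E_F > 0) (hEB : E_B > 0) :
    StrictAntiOn
      (fun g : ℝ => D / (E_S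
        + (g * T * Real.exp (2 * g * δ) / (g * T * Real.exp (g * δ) + 1)) * E_F
        + (1 + (g * T - 1) * Real.exp (g * δ)) * E_B))
      (Set.Ioi (0:ℝ)) := fun _ ha _ hb hab =>
  div_lt_div_of_pos_left hD (csmaEnergyCost_pos hδ hT.le hES hEF hEB ha)
    (strictMonoOn_csmaEnergyCost hδ hT.le hEF hEB ha hb hab)
end

section
/- Let τ > 0, T > 0, and δ > 0. Consider f(g) = g·τ/(1 + g·T·e^{gδ}) on (0,∞). There exists a unique g* > 0 satisfying (g*)²·T·δ·e^{g*δ} = 1, and f is strictly increasing on (0, g*) and strictly decreasing on (g*, ∞); in particular, f attains its maximum over (0,∞) uniquely at g*. -/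
/-!
With `D g = 1 + g * T * exp (g * δ)`, the derivative of `g * τ / D g` is
`τ * (1 - g ^ 2 * T * δ * exp (g * δ)) / D g ^ 2`. The map `g ↦ g ^ 2 * T * δ * exp (g * δ)`
increases strictly from `0` to beyond `1` on `[0, ∞)`, so it crosses `1` at exactly one point `g*`,
and the derivative is positive before `g*` and negative after it.
-/

open Real Set

theorem strictMonoOn_of_hasDerivAt_pos {D : Set ℝ} (hD : Convex ℝ D) {f f' : ℝ → ℝ}
    (hf : ∀ x ∈ D, HasDerivAt f (f' x) x) (hf' : ∀ x ∈ interior D, 0 < f' x) :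
    StrictMonoOn f D :=
  strictMonoOn_of_hasDerivWithinAt_pos hD (fun x hx ↦ (hf x hx).continuousAt.continuousWithinAt)
    (fun x hx ↦ (hf x (interior_subset hx)).hasDerivWithinAt) hf'

theorem strictAntiOn_of_hasDerivAt_neg {D : Set ℝ} (hD : Convex ℝ D) {f f' : ℝ → ℝ}
    (hf : ∀ x ∈ D, HasDerivAt f (f' x) x) (hf' : ∀ x ∈ interior D, f' x < 0) :
    StrictAntiOn f D :=
  strictAntiOn_of_hasDerivWithinAt_neg hD (fun x hx ↦ (hf x hx).continuousAt.continuousWithinAt)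
    (fun x hx ↦ (hf x (interior_subset hx)).hasDerivWithinAt) hf'

theorem lt_of_strictMonoOn_Ioc_of_strictAntiOn_Ici {α β : Type*} [LinearOrder α] [Preorder β]
    {f : α → β} {a b x : α} (hmono : StrictMonoOn f (Ioc b a)) (hanti : StrictAntiOn f (Ici a))
    (hx : b < x) (hxa : x ≠ a) : f x < f a := by
  rcases hxa.lt_or_gt with hlt | hgt
  · exact hmono ⟨hx, hlt.le⟩ ⟨hx.trans hlt, le_rfl⟩ hlt
  · exact hanti le_rfl hgt.le hgt

theorem one_add_mul_mul_exp_pos {g T : ℝ} (hg : 0 ≤ g) (hT : 0 ≤ T) (δ : ℝ) :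
    0 < 1 + g * T * exp (g * δ) := by
  positivity

noncomputable def spectralEfficiency (τ T δ g : ℝ) : ℝ :=
  g * τ / (1 + g * T * exp (g * δ))

theorem hasDerivAt_spectralEfficiency (τ T δ : ℝ) {g : ℝ} (hg : 1 + g * T * exp (g * δ) ≠ 0) :
    HasDerivAt (spectralEfficiency τ T δ)
      (τ * (1 - g ^ 2 * T * δ * exp (g * δ)) / (1 + g * T * exp (g * δ)) ^ 2) g := by
  have hden : HasDerivAt (fun g => 1 + g * T * exp (g * δ))
      (T * exp (g * δ) + g * T * (exp (g * δ) * δ)) g :=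
    (((hasDerivAt_id g).mul_const T).mul ((hasDerivAt_mul_const δ).exp)).const_add 1 |>.congr_deriv
      (by simp)
  refine ((hasDerivAt_mul_const τ).div hden hg).congr_deriv ?_
  ring

section

variable {τ T δ : ℝ}

theorem strictMonoOn_sq_mul_mul_exp (hT : 0 < T) (hδ : 0 < δ) :
    StrictMonoOn (fun g => g ^ 2 * T * δ * exp (g * δ)) (Ici 0) := by
  intro a (ha : 0 ≤ a) b _ hab
  have hsq : a ^ 2 < b ^ 2 := pow_lt_pow_left₀ hab ha two_ne_zero
  have hexp : exp (a * δ) < exp (b * δ) := exp_lt_exp.2 (mul_lt_mul_of_pos_right hab hδ)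
  have hprod := mul_lt_mul'' hsq hexp (sq_nonneg a) (exp_pos _).le
  have hTδ : 0 < T * δ := mul_pos hT hδ
  calc a ^ 2 * T * δ * exp (a * δ) = T * δ * (a ^ 2 * exp (a * δ)) := by ring
    _ < T * δ * (b ^ 2 * exp (b * δ)) := mul_lt_mul_of_pos_left hprod hTδ
    _ = b ^ 2 * T * δ * exp (b * δ) := by ring

theorem exists_pos_sq_mul_mul_exp_eq_one (hT : 0 < T) (hδ : 0 < δ) :
    ∃ g, 0 < g ∧ g ^ 2 * T * δ * exp (g * δ) = 1 := by
  have hTδ : 0 < T * δ := mul_pos hT hδ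
  set b := 1 + (T * δ)⁻¹
  have hb : 1 ≤ b := le_add_of_nonneg_right (by positivity)
  have hbTδ : b * (T * δ) = T * δ + 1 := by
    rw [add_mul, one_mul, inv_mul_cancel₀ hTδ.ne']
  have hsq : 1 ≤ b ^ 2 * T * δ := by nlinarith
  have hcross : 1 ≤ b ^ 2 * T * δ * exp (b * δ) :=
    hsq.trans (le_mul_of_one_le_right (by positivity) (one_le_exp (by positivity)))
  obtain ⟨g, hg, hg1⟩ := intermediate_value_Icc (zero_le_one.trans hb)
    (by fun_prop : Continuous fun g => g ^ 2 * T * δ * exp (g * δ)).continuousOn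
    ⟨by simp, hcross⟩
  refine ⟨g, hg.1.lt_of_ne ?_, hg1⟩
  rintro rfl
  simp at hg1

theorem strictMonoOn_spectralEfficiency (hτ : 0 < τ) (hT : 0 < T) (hδ : 0 < δ) {a : ℝ}
    (ha : 0 < a) (hcrit : a ^ 2 * T * δ * exp (a * δ) = 1) :
    StrictMonoOn (spectralEfficiency τ T δ) (Ioc 0 a) := by
  refine strictMonoOn_of_hasDerivAt_pos (convex_Ioc 0 a) (fun x hx ↦
    hasDerivAt_spectralEfficiency τ T δ (one_add_mul_mul_exp_pos hx.1.le hT.le δ).ne') ?_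
  intro x hx
  rw [interior_Ioc] at hx
  obtain ⟨hx, hxa⟩ := hx
  have hlt : x ^ 2 * T * δ * exp (x * δ) < 1 :=
    hcrit ▸ strictMonoOn_sq_mul_mul_exp hT hδ hx.le ha.le hxa
  exact div_pos (mul_pos hτ (sub_pos.2 hlt)) (pow_pos (one_add_mul_mul_exp_pos hx.le hT.le δ) 2)

theorem strictAntiOn_spectralEfficiency (hτ : 0 < τ) (hT : 0 < T) (hδ : 0 < δ) {a : ℝ}
    (ha : 0 < a) (hcrit : a ^ 2 * T * δ * exp (a * δ) = 1) :
    StrictAntiOn (spectralEfficiency τ T δ) (Ici a) := by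
  refine strictAntiOn_of_hasDerivAt_neg (convex_Ici a) (fun x (hx : a ≤ x) ↦
    hasDerivAt_spectralEfficiency τ T δ (one_add_mul_mul_exp_pos (ha.le.trans hx) hT.le δ).ne') ?_
  intro x hax
  rw [interior_Ici] at hax
  have hx : 0 ≤ x := ha.le.trans hax.le
  have hgt : 1 < x ^ 2 * T * δ * exp (x * δ) :=
    hcrit ▸ strictMonoOn_sq_mul_mul_exp hT hδ ha.le hx hax
  exact div_neg_of_neg_of_pos (mul_neg_of_pos_of_neg hτ (sub_neg.2 hgt))
    (pow_pos (one_add_mul_mul_exp_pos hx hT.le δ) 2)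

end

theorem csma_spectral_efficiency_unimodal
    (τ T δ : ℝ) (hτ : τ > 0) (hT : T > 0) (hδ : δ > 0) :
    ∃ gstar : ℝ, 0 < gstar ∧
      gstar ^ 2 * T * δ * Real.exp (gstar * δ) = 1 ∧
      (∀ g : ℝ, 0 < g → g ^ 2 * T * δ * Real.exp (g * δ) = 1 → g = gstar) ∧
      StrictMonoOn (fun g : ℝ => g * τ / (1 + g * T * Real.exp (g * δ)))
        (Set.Ioo (0:ℝ) gstar) ∧
      StrictAntiOn (fun g : ℝ => g * τ / (1 + g * T * Real.exp (g * δ)))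
        (Set.Ioi gstar) ∧
      (∀ g : ℝ, 0 < g → g ≠ gstar →
        g * τ / (1 + g * T * Real.exp (g * δ))
          < gstar * τ / (1 + gstar * T * Real.exp (gstar * δ))) := by
  obtain ⟨a, ha, hcrit⟩ := exists_pos_sq_mul_mul_exp_eq_one hT hδ
  have hmono := strictMonoOn_spectralEfficiency hτ hT hδ ha hcrit
  have hanti := strictAntiOn_spectralEfficiency hτ hT hδ ha hcrit
  refine ⟨a, ha, hcrit, fun g hg hg1 ↦ ?_, hmono.mono Ioo_subset_Ioc_self,
    hanti.mono Ioi_subset_Ici_self, fun g hg hga ↦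
      lt_of_strictMonoOn_Ioc_of_strictAntiOn_Ici hmono hanti hg hga⟩
  exact (strictMonoOn_sq_mul_mul_exp hT hδ).injOn hg.le ha.le (hg1.trans hcrit.symm)
end
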